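/- Suppose n ≡ 0 (mod 4) or n ≡ 1 (mod 4) with n ≥ 4. Then for every ℓ ∈ [n], the number of n-queens configurations Q fixed by the 90° rotation r with U_ℓ ⊆ Q equals the number of n-queens configurations Q fixed by r with U_{n+1−ℓ} ⊆ Q. -/

import Mathlib

/-!
The vertical reflection `s` is an involution of the board. It maps rows to rows and columns to
columns and exchanges diagonals with anti-diagonals, so it preserves `n`-queens configurations;
since `r ∘ s = s ∘ r³` it maps `r`-fixed sets to `r`-fixed sets; and it maps `U_ℓ` to
`U_{n+1-ℓ}` (the centre square is fixed because `n` is odd when `n ≡ 1 (mod 4)`). Hence `s`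
is a bijection between the two families being counted.
-/

open scoped Classical

/-- The `n × n` board, with squares indexed by `[n] × [n]` where `[n] = {1, …, n}`. -/
def board (n : ℕ) : Finset (ℕ × ℕ) := Finset.Icc 1 n ×ˢ Finset.Icc 1 n

/-- `Q` is an `n`-queens configuration: `Q ⊆ [n] × [n]`, `|Q| = n`, and every row,
column, diagonal (`j - i + n = k`) and anti-diagonal (`i + j - 1 = k`) contains at
most one element of `Q`. -/
def IsQueensConfig (n : ℕ) (Q : Finset (ℕ × ℕ)) : Prop :=
  Q ⊆ board n ∧ Q.card = n ∧
  (∀ p ∈ Q, ∀ q ∈ Q, p.1 = q.1 → p = q) ∧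
  (∀ p ∈ Q, ∀ q ∈ Q, p.2 = q.2 → p = q) ∧
  (∀ p ∈ Q, ∀ q ∈ Q, p.2 + n - p.1 = q.2 + n - q.1 → p = q) ∧
  (∀ p ∈ Q, ∀ q ∈ Q, p.1 + p.2 - 1 = q.1 + q.2 - 1 → p = q)

/-- `Q(n)`: the number of `n`-queens configurations. -/
noncomputable def queensCount (n : ℕ) : ℕ :=
  ((board n).powerset.filter (fun Q => IsQueensConfig n Q)).card

/-- The vertical reflection `s`, `sQ = {(i, n+1-j) : (i,j) ∈ Q}`. -/
def sAct (n : ℕ) (Q : Finset (ℕ × ℕ)) : Finset (ℕ × ℕ) :=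
  Q.image (fun p => (p.1, n + 1 - p.2))

/-- The 90° counter-clockwise rotation `r`, `rQ = {(n+1-j, i) : (i,j) ∈ Q}`. -/
def rAct (n : ℕ) (Q : Finset (ℕ × ℕ)) : Finset (ℕ × ℕ) :=
  Q.image (fun p => (n + 1 - p.2, p.1))

/-- The border configuration `U_ℓ`: four `r`-symmetric border squares, together with
the center square `((n+1)/2, (n+1)/2)` when `n ≡ 1 (mod 4)`. -/
def borderU (n ℓ : ℕ) : Finset (ℕ × ℕ) :=
  if n % 4 = 0 then
    {(1, ℓ), (ℓ, n), (n, n + 1 - ℓ), (n + 1 - ℓ, 1)}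
  else
    {(1, ℓ), (ℓ, n), (n, n + 1 - ℓ), (n + 1 - ℓ, 1)} ∪ {((n + 1) / 2, (n + 1) / 2)}

open Finset

noncomputable def fixedQueensContaining (n : ℕ) (U : Finset (ℕ × ℕ)) : Finset (Finset (ℕ × ℕ)) :=
  (board n).powerset.filter (fun Q => IsQueensConfig n Q ∧ rAct n Q = Q ∧ U ⊆ Q)

section Reflection

variable {n : ℕ} {Q : Finset (ℕ × ℕ)}

lemma mem_board {p : ℕ × ℕ} : p ∈ board n ↔ 1 ≤ p.1 ∧ p.1 ≤ n ∧ 1 ≤ p.2 ∧ p.2 ≤ n := by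
  simp only [board, mem_product, mem_Icc, and_assoc]

lemma sAct_subset_board (hQ : Q ⊆ board n) : sAct n Q ⊆ board n := by
  intro p hp
  obtain ⟨q, hq, rfl⟩ := mem_image.mp hp
  have := mem_board.mp (hQ hq)
  exact mem_board.mpr ⟨by omega, by omega, by omega, by omega⟩

lemma sAct_sAct (hQ : Q ⊆ board n) : sAct n (sAct n Q) = Q := by
  rw [sAct, sAct, image_image]
  refine (image_congr fun p hp => ?_).trans image_id
  have := mem_board.mp (hQ hp)
  exact Prod.ext rfl (show n + 1 - (n + 1 - p.2) = p.2 by omega)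

lemma card_sAct (hQ : Q ⊆ board n) : (sAct n Q).card = Q.card := by
  refine card_image_of_injOn fun p hp q hq hpq => ?_
  have := mem_board.mp (hQ hp)
  have := mem_board.mp (hQ hq)
  simp only [Prod.mk.injEq] at hpq
  exact Prod.ext hpq.1 (by omega)

lemma lineCondition_sAct {f g : ℕ × ℕ → ℕ} (hQ : Q ⊆ board n)
    (hfg : ∀ p ∈ board n, ∀ q ∈ board n,
      f (p.1, n + 1 - p.2) = f (q.1, n + 1 - q.2) → g p = g q)
    (hg : ∀ p ∈ Q, ∀ q ∈ Q, g p = g q → p = q) :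
    ∀ p ∈ sAct n Q, ∀ q ∈ sAct n Q, f p = f q → p = q := by
  rintro _ hp' _ hq' hpq
  obtain ⟨p, hp, rfl⟩ := mem_image.mp hp'
  obtain ⟨q, hq, rfl⟩ := mem_image.mp hq'
  rw [hg p hp q hq (hfg p (hQ hp) q (hQ hq) hpq)]

lemma isQueensConfig_sAct (h : IsQueensConfig n Q) : IsQueensConfig n (sAct n Q) := by
  obtain ⟨hsub, hcard, hrow, hcol, hdiag, hanti⟩ := h
  refine ⟨sAct_subset_board hsub, (card_sAct hsub).trans hcard,
    lineCondition_sAct hsub ?_ hrow, lineCondition_sAct hsub ?_ hcol,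
    lineCondition_sAct hsub ?_ hanti, lineCondition_sAct hsub ?_ hdiag⟩ <;>
  · intro p hp q hq hpq
    have := mem_board.mp hp
    have := mem_board.mp hq
    dsimp only at hpq ⊢
    omega

lemma rAct_sAct (hQ : Q ⊆ board n) :
    rAct n (sAct n Q) = sAct n (rAct n (rAct n (rAct n Q))) := by
  simp only [rAct, sAct, image_image]
  refine image_congr fun p hp => ?_
  have := mem_board.mp (hQ hp)
  simp only [Function.comp_apply, Prod.mk.injEq, true_and]
  omega

lemma rAct_sAct_of_rAct_eq (hQ : Q ⊆ board n) (hr : rAct n Q = Q) :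
    rAct n (sAct n Q) = sAct n Q := by
  rw [rAct_sAct hQ, hr, hr, hr]

lemma sAct_mem_fixedQueensContaining {U : Finset (ℕ × ℕ)} (hQ : Q ∈ fixedQueensContaining n U) :
    sAct n Q ∈ fixedQueensContaining n (sAct n U) := by
  simp only [fixedQueensContaining, mem_filter, mem_powerset] at hQ ⊢
  obtain ⟨hsub, hconf, hr, hU⟩ := hQ
  exact ⟨sAct_subset_board hsub, isQueensConfig_sAct hconf, rAct_sAct_of_rAct_eq hsub hr,
    image_subset_image hU⟩

lemma card_fixedQueensContaining_eq {U V : Finset (ℕ × ℕ)}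
    (hUV : sAct n U = V) (hVU : sAct n V = U) :
    (fixedQueensContaining n U).card = (fixedQueensContaining n V).card := by
  have subset_board {W : Finset (ℕ × ℕ)} {Q} (hQ : Q ∈ fixedQueensContaining n W) :
      Q ⊆ board n := mem_powerset.mp (mem_filter.mp hQ).1
  refine card_nbij' (sAct n) (sAct n) (fun Q hQ => ?_) (fun Q hQ => ?_)
    (fun Q hQ => sAct_sAct (subset_board hQ)) (fun Q hQ => sAct_sAct (subset_board hQ))
  · simpa only [mem_coe, hUV] using sAct_mem_fixedQueensContaining hQ
  · simpa only [mem_coe, hVU] using sAct_mem_fixedQueensContaining hQ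

lemma sAct_borderU {l : ℕ} (hmod : n % 4 = 0 ∨ n % 4 = 1) (hl : l ≤ n + 1) :
    sAct n (borderU n l) = borderU n (n + 1 - l) := by
  have hl' : n + 1 - (n + 1 - l) = l := by omega
  unfold borderU
  split_ifs with h
  · simp only [sAct, image_insert, image_singleton, hl', Nat.add_sub_cancel_left,
      Nat.add_sub_cancel]
    ext
    simp only [mem_insert, mem_singleton]
    tauto
  · have hcentre : n + 1 - (n + 1) / 2 = (n + 1) / 2 := by omega
    simp only [sAct, image_union, image_insert, image_singleton, hl', hcentre,
      Nat.add_sub_cancel_left, Nat.add_sub_cancel]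
    ext
    simp only [mem_union, mem_insert, mem_singleton]
    tauto

end Reflection

theorem count_borderU_symm_general (n : ℕ) (hmod : n % 4 = 0 ∨ n % 4 = 1)
    (l : ℕ) (hl : l ∈ Finset.Icc 1 n) :
    ((board n).powerset.filter
        (fun Q => IsQueensConfig n Q ∧ rAct n Q = Q ∧ borderU n l ⊆ Q)).card =
      ((board n).powerset.filter
        (fun Q => IsQueensConfig n Q ∧ rAct n Q = Q ∧
          borderU n (n + 1 - l) ⊆ Q)).card := by
  have hl' : l ≤ n + 1 := (mem_Icc.mp hl).2.trans n.le_succ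
  refine card_fixedQueensContaining_eq (sAct_borderU hmod hl') ?_
  simpa only [Nat.sub_sub_self hl'] using sAct_borderU hmod (Nat.sub_le (n + 1) l)

/-- For `n ≥ 4` with `n ≡ 0` or `1 (mod 4)` and `ℓ ∈ [n]`, the number of `r`-fixed
`n`-queens configurations containing `U_ℓ` equals the number of those containing
`U_{n+1-ℓ}`. -/
theorem count_borderU_symm (n : ℕ) (hn : 4 ≤ n) (hmod : n % 4 = 0 ∨ n % 4 = 1)
    (l : ℕ) (hl : l ∈ Finset.Icc 1 n) :
    ((board n).powerset.filter
        (fun Q => IsQueensConfig n Q ∧ rAct n Q = Q ∧ borderU n l ⊆ Q)).card =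
      ((board n).powerset.filter
        (fun Q => IsQueensConfig n Q ∧ rAct n Q = Q ∧
          borderU n (n + 1 - l) ⊆ Q)).card :=
  count_borderU_symm_general n hmod l hl
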